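/- arXiv:2506.18278 — 4 statements merged into one kernel-verified Lean document; each statement's English description precedes it below -/
import Mathlib

section
/- For integers t ≥ 1, K > 1, and 0 ≤ m ≤ t-1, the partial sum identity holds: ∑_{k=t-m}^{t} (kK - t) · C(t,k) · (K-1)^{t-k} = t · (K-1)^{m+1} · C(t-1, m). -/
/-!
Writing `x = K - 1` and `i = t - k`, the summand becomes `((t - i) x - i) C(t,i) x^i`. Since
`(t - i) C(t,i) = t C(t-1,i)` and `i C(t,i) = t C(t-1,i-1)`, it equals
`t (C(t-1,i) x^(i+1) - C(t-1,i-1) x^i)`, so the sum telescopes.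
-/

open Finset

theorem Nat.sub_mul_choose (t i : ℕ) : (t - i) * t.choose i = t * (t - 1).choose i := by
  cases t with
  | zero => simp
  | succ n => simpa [mul_comm] using (Nat.choose_mul_succ_eq n i).symm

theorem Nat.add_one_mul_choose_add_one (t i : ℕ) :
    (i + 1) * t.choose (i + 1) = t * (t - 1).choose i := by
  cases t with
  | zero => simp
  | succ n => simpa [mul_comm] using (Nat.add_one_mul_choose_eq n i).symm

theorem sum_range_sub_mul_choose_mul_pow {R : Type*} [CommRing R] (x : R) (t m : ℕ) :
    ∑ i ∈ range (m + 1), (((t - i : ℕ) : R) * x - i) * t.choose i * x ^ i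
      = t * x ^ (m + 1) * (t - 1).choose m := by
  induction m with
  | zero => simp
  | succ m ih =>
    have hsub : ((t - (m + 1) : ℕ) : R) * t.choose (m + 1) = t * (t - 1).choose (m + 1) := by
      rw [← Nat.cast_mul, ← Nat.cast_mul, Nat.sub_mul_choose]
    have hadd : ((m + 1 : ℕ) : R) * t.choose (m + 1) = t * (t - 1).choose m := by
      rw [← Nat.cast_mul, ← Nat.cast_mul, Nat.add_one_mul_choose_add_one]
    rw [sum_range_succ, ih]
    push_cast at hadd ⊢
    linear_combination x ^ (m + 2) * hsub - x ^ (m + 1) * hadd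

theorem stmt_0_general (t m : ℕ) (K : ℝ) (hm : m ≤ t - 1) :
    ∑ k ∈ Finset.Icc (t - m) t,
      ((k : ℝ) * K - (t : ℝ)) * (t.choose k : ℝ) * (K - 1) ^ (t - k)
    = (t : ℝ) * (K - 1) ^ (m + 1) * ((t - 1).choose m : ℝ) := by
  rw [← sum_range_sub_mul_choose_mul_pow]
  refine sum_nbij' (t - ·) (t - ·) ?_ ?_ ?_ ?_ ?_
  iterate 4
    · intro _ h
      simp only [mem_Icc, mem_range] at h ⊢
      omega
  · intro k hk
    have hkt : k ≤ t := (mem_Icc.mp hk).2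
    rw [Nat.sub_sub_self hkt, Nat.choose_symm hkt, Nat.cast_sub hkt]
    ring

/-- Partial sum identity: for `t ≥ 1`, real `K > 1`, and `m ≤ t-1`,
`∑_{k=t-m}^{t} (kK - t) C(t,k) (K-1)^{t-k} = t (K-1)^{m+1} C(t-1,m)`. -/
theorem stmt_0 (t m : ℕ) (K : ℝ) (ht : 1 ≤ t) (hK : 1 < K) (hm : m ≤ t - 1) :
    ∑ k ∈ Finset.Icc (t - m) t,
      ((k : ℝ) * K - (t : ℝ)) * (t.choose k : ℝ) * (K - 1) ^ (t - k)
    = (t : ℝ) * (K - 1) ^ (m + 1) * ((t - 1).choose m : ℝ) :=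
  stmt_0_general t m K hm
end

section
/- Let {Z(t)} be i.i.d. random variables taking value K-1 with probability 1/K and -1 with probability (K-1)/K, for an integer K > 1. Let S(t) = ∑_{s=1}^t Z(s). Then E[max{S(t), 0}] = (t(K-1)^{m₀+1}/K^t) · C(t-1, m₀), where k₀ = ⌊t/K⌋ + 1 and m₀ = t - k₀. -/
/-!
The positive part of `S = kK - t` vanishes exactly for `k < k₀`, so `E[max S 0]` is the tail sum
`∑_{k ≥ k₀} (kK - t) b(k)` of the binomial weights `b(k) = C(t,k) p^k q^(t-k)`, `p = 1/K`,
`q = (K-1)/K`. Writing `kK - t = K (k - tp)`, each term is `K (g k - g (k+1))` for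
`g k = k C(t,k) p^k q^(t+1-k)` (this needs only `p + q = 1`), so the sum telescopes to `K g k₀`,
and `k₀ C(t,k₀) = t C(t-1,m₀)` gives the closed form.
-/

open MeasureTheory Finset

section FiniteRange

variable {Ω α ι E : Type*} [MeasurableSpace Ω] [MeasurableSpace α] [MeasurableSingletonClass α]
  [NormedAddCommGroup E] [NormedSpace ℝ E] [CompleteSpace E]

theorem integral_comp_eq_sum_of_forall_exists_eq (μ : Measure Ω) [IsFiniteMeasure μ]
    {X : Ω → α} (hX : Measurable X) {s : Finset ι} {v : ι → α} (hv : Set.InjOn v s)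
    (hval : ∀ ω, ∃ k ∈ s, X ω = v k) (f : α → E) :
    ∫ ω, f (X ω) ∂μ = ∑ k ∈ s, μ.real (X ⁻¹' {v k}) • f (v k) := by
  have hmeas : ∀ k, MeasurableSet (X ⁻¹' {v k}) := fun k => hX (measurableSet_singleton _)
  have hpt : ∀ ω, f (X ω) = ∑ k ∈ s, (X ⁻¹' {v k}).indicator (fun _ => f (v k)) ω := by
    intro ω
    obtain ⟨k, hk, hXω⟩ := hval ω
    rw [sum_eq_single_of_mem k hk fun j hj hjk => Set.indicator_of_notMem ?_ _]
    · rw [Set.indicator_of_mem (by exact hXω), hXω]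
    · exact fun hj' => hjk (hv hj hk (hj'.symm.trans hXω))
  simp_rw [hpt]
  rw [integral_finsetSum _ fun k _ => (integrable_const _).indicator (hmeas k)]
  exact sum_congr rfl fun k _ => integral_indicator_const _ (hmeas k)

end FiniteRange

section Binomial

variable {R : Type*} [CommRing R] {p q : R}

theorem sub_mul_choose_mul_pow_eq_sub (hpq : p + q = 1) {n k : ℕ} (hk : k ≤ n) :
    ((k : R) - n * p) * (n.choose k * p ^ k * q ^ (n - k)) =
      k * n.choose k * p ^ k * q ^ (n + 1 - k) -
        (k + 1 : ℕ) * n.choose (k + 1) * p ^ (k + 1) * q ^ (n + 1 - (k + 1)) := by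
  have hchoose : ((n.choose (k + 1) * (k + 1) : ℕ) : R) = (n.choose k * (n - k) : ℕ) :=
    congrArg Nat.cast (Nat.choose_succ_right_eq n k)
  rw [show n + 1 - k = n - k + 1 by omega, show n + 1 - (k + 1) = n - k by omega]
  push_cast [Nat.cast_sub hk] at hchoose ⊢
  linear_combination (p ^ (k + 1) * q ^ (n - k)) * hchoose -
    (k * n.choose k * p ^ k * q ^ (n - k)) * hpq

theorem sum_Ico_sub_mul_choose_mul_pow (hpq : p + q = 1) {n a : ℕ} (ha : a ≤ n + 1) :
    ∑ k ∈ Ico a (n + 1), ((k : R) - n * p) * (n.choose k * p ^ k * q ^ (n - k)) =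
      a * n.choose a * p ^ a * q ^ (n + 1 - a) := by
  set g : ℕ → R := fun k => k * n.choose k * p ^ k * q ^ (n + 1 - k)
  have htop : g (n + 1) = 0 := by simp [g]
  calc _ = ∑ k ∈ Ico a (n + 1), -(g (k + 1) - g k) :=
        sum_congr rfl fun k hk => by
          rw [sub_mul_choose_mul_pow_eq_sub hpq (by grind), neg_sub]
    _ = g a := by rw [sum_neg_distrib, sum_Ico_sub _ ha, htop]; ring

end Binomial

theorem sum_range_mul_max_sub_zero {K : ℕ} (hK : 0 < K) (t : ℕ) (w : ℕ → ℝ) :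
    ∑ k ∈ range (t + 1), w k * max ((k : ℝ) * K - t) 0 =
      ∑ k ∈ Ico (t / K + 1) (t + 1), w k * ((k : ℝ) * K - t) := by
  have hsplit : t / K + 1 ≤ t + 1 := Nat.succ_le_succ (Nat.div_le_self t K)
  rw [range_eq_Ico, ← sum_Ico_consecutive _ (Nat.zero_le _) hsplit, add_eq_right.mpr]
  · refine sum_congr rfl fun k hk => ?_
    have : t < k * K := (Nat.div_lt_iff_lt_mul hK).mp (by grind)
    rw [max_eq_left (sub_nonneg.mpr (by exact_mod_cast this.le))]
  · refine sum_eq_zero fun k hk => ?_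
    have : k * K ≤ t := (Nat.le_div_iff_mul_le hK).mp (by grind)
    rw [max_eq_right (sub_nonpos.mpr (by exact_mod_cast this)), mul_zero]

theorem mul_choose_eq_mul_choose_sub_one {n k m : ℕ} (hk : 1 ≤ k) (hkm : k + m = n) :
    k * n.choose k = n * (n - 1).choose m := by
  obtain ⟨j, rfl⟩ : ∃ j, k = j + 1 := ⟨k - 1, by omega⟩
  subst hkm
  rw [show j + 1 + m - 1 = j + m by omega, ← Nat.choose_symm_of_eq_add rfl, add_right_comm,
    Nat.add_one_mul_choose_eq, mul_comm]

/-- For `S(t)` a sum of i.i.d. binary variables taking value `K-1` w.p. `1/K` and `-1`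
w.p. `(K-1)/K` (so `S` takes value `kK - t` with probability `C(t,k)(1/K)^k((K-1)/K)^{t-k}`),
`E[max{S(t),0}] = (t (K-1)^{m₀+1} / K^t) C(t-1, m₀)` with `k₀ = ⌊t/K⌋ + 1`, `m₀ = t - k₀`. -/
theorem stmt_1 {Ω : Type*} [MeasurableSpace Ω] (μ : Measure Ω) [IsProbabilityMeasure μ]
    (K t : ℕ) (hK : 1 < K) (ht : 1 ≤ t)
    (S : Ω → ℝ) (hS : Measurable S)
    (hval : ∀ ω, ∃ k ≤ t, S ω = (k : ℝ) * (K : ℝ) - (t : ℝ))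
    (hprob : ∀ k ≤ t, μ {ω | S ω = (k : ℝ) * (K : ℝ) - (t : ℝ)}
      = ENNReal.ofReal ((t.choose k : ℝ) * (1 / (K : ℝ)) ^ k * (((K : ℝ) - 1) / K) ^ (t - k)))
    (k₀ m₀ : ℕ) (hk₀ : k₀ = t / K + 1) (hm₀ : m₀ = t - k₀) :
    ∫ ω, max (S ω) 0 ∂μ
      = (t : ℝ) * ((K : ℝ) - 1) ^ (m₀ + 1) / (K : ℝ) ^ t * ((t - 1).choose m₀ : ℝ) := by
  have hK₀ : (K : ℝ) ≠ 0 := by positivity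
  have hk₀m₀ : k₀ + m₀ = t := by have := Nat.div_lt_self ht hK; omega
  set p : ℝ := 1 / K with hp
  set q : ℝ := ((K : ℝ) - 1) / K with hq
  have hpq : p + q = 1 := by rw [hp, hq]; field_simp; ring
  have hq₀ : 0 ≤ q := div_nonneg (by simp [hK.le]) (Nat.cast_nonneg K)
  have hinj : Set.InjOn (fun k : ℕ => (k : ℝ) * K - t) (range (t + 1)) := fun i _ j _ h => by
    simpa [hK₀] using h
  rw [integral_comp_eq_sum_of_forall_exists_eq μ hS hinj
    (fun ω => by simpa [Nat.lt_succ_iff] using hval ω) (max · 0)]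
  calc _ = ∑ k ∈ range (t + 1), (t.choose k * p ^ k * q ^ (t - k)) * max ((k : ℝ) * K - t) 0 := by
        refine sum_congr rfl fun k hk => ?_
        change (μ {ω | S ω = _}).toReal • _ = _
        rw [hprob k (by simpa [Nat.lt_succ_iff] using hk), ENNReal.toReal_ofReal (by positivity),
          smul_eq_mul]
    _ = K * ∑ k ∈ Ico k₀ (t + 1), ((k : ℝ) - t * p) * (t.choose k * p ^ k * q ^ (t - k)) := by
        rw [sum_range_mul_max_sub_zero (by omega), mul_sum, hk₀]
        refine sum_congr rfl fun k _ => ?_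
        rw [hp]; field_simp
    _ = K * (k₀ * t.choose k₀ * p ^ k₀ * q ^ (m₀ + 1)) := by
        rw [sum_Ico_sub_mul_choose_mul_pow hpq (by omega), show t + 1 - k₀ = m₀ + 1 by omega]
    _ = _ := by
        have hchoose : (k₀ * t.choose k₀ : ℝ) = t * (t - 1).choose m₀ := by
          exact_mod_cast mul_choose_eq_mul_choose_sub_one (by simp [hk₀]) hk₀m₀
        have hKt : (K : ℝ) ^ t = K ^ k₀ * K ^ m₀ := by rw [← pow_add, hk₀m₀]
        rw [hchoose, hp, hq, hKt, div_pow, one_pow, div_pow]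
        field_simp
        ring
end

section
/- For real K > 1 and t > K/(K-1), with m₀ = t - ⌊t/K⌋ - 1, the inequality ((K-1)^{m₀+1}/K^t) · (t-1)^{t-1} / (m₀^{m₀} (t-1-m₀)^{t-1-m₀}) ≥ ((K-1)/K) · min{1 - K/t, 1 - K/(t(K-1))} holds. -/
/-!
With `F = ⌊t/K⌋` and `m₀ + F = t - 1`, the logarithm of the left side is `log ((K-1)/K)` minus the
relative entropy of `(m₀, F)` with respect to the binomial means `((t-1)(K-1)/K, (t-1)/K)`.
Bounding `log x ≤ x - 1` turns that relative entropy into a χ²-distance, which equals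
`e² / ((t-1)(K-1))` with `e = t - 1 - F K ∈ [-1, K - 1]`; this is at most
`max (K/t) (K/(t(K-1))) ≤ -log min (1 - K/t) (1 - K/(t(K-1)))`.
When that minimum is not positive the inequality is trivial.
-/

open Real

theorem mul_log_div_add_mul_log_div_le {x y a b : ℝ} (hx : 0 ≤ x) (hy : 0 ≤ y) (ha : 0 < a)
    (hb : 0 < b) (h : x + y = a + b) :
    x * log (x / a) + y * log (y / b) ≤ (x - a) ^ 2 / a + (y - b) ^ 2 / b := by
  have mul_log_div_le : ∀ {z c : ℝ}, 0 ≤ z → 0 < c → z * log (z / c) ≤ (z - c) ^ 2 / c + (z - c) := by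
    intro z c hz hc
    rcases hz.eq_or_lt with rfl | hz
    · simp [sq, hc.ne']
    calc z * log (z / c) ≤ z * (z / c - 1) :=
          mul_le_mul_of_nonneg_left (log_le_sub_one_of_pos (by positivity)) hz.le
      _ = (z - c) ^ 2 / c + (z - c) := by field_simp; ring
  linarith [mul_log_div_le hx ha, mul_log_div_le hy hb]

theorem log_rpow_binomial_term {K t m f : ℝ} (hK : 1 < K) (hm : 0 < m) (hf : 0 < f)
    (h : m + f = t - 1) :
    log ((K - 1) ^ (m + 1) / K ^ t * (t - 1) ^ (t - 1) / (m ^ m * f ^ f))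
      = log ((K - 1) / K)
        - (m * log (m / ((t - 1) * (K - 1) / K)) + f * log (f / ((t - 1) / K))) := by
  have hn : 0 < t - 1 := by linarith
  obtain rfl : f = t - 1 - m := by linarith
  rw [log_div (by positivity) (by positivity), log_mul (by positivity) (by positivity),
    log_div (by positivity) (by positivity), log_mul (by positivity) (by positivity),
    log_rpow (by linarith), log_rpow (by linarith), log_rpow hn, log_rpow hm, log_rpow hf,
    log_div (by positivity) (by positivity), log_div (by positivity) (by positivity),
    log_div (by positivity) (by positivity), log_div (by positivity) (by positivity),
    log_div (by positivity) (by positivity), log_mul (by positivity) (by positivity)]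
  ring

theorem sq_div_le_max {K t e : ℝ} (hK : 1 < K) (htK : K < t) (htK' : K < t * (K - 1))
    (he₁ : -1 ≤ e) (he₂ : e ≤ K - 1) :
    e ^ 2 / ((t - 1) * (K - 1)) ≤ max (K / t) (K / (t * (K - 1))) := by
  have hn : 0 < t - 1 := by linarith
  have hK1 : 0 < K - 1 := by linarith
  have ht : 0 < t := by linarith
  rcases le_total K 2 with hK2 | hK2
  · refine le_max_of_le_right ?_
    rw [div_le_div_iff₀ (by positivity) (by positivity)]
    have : e ^ 2 ≤ 1 := by nlinarith
    nlinarith [mul_le_mul_of_nonneg_right this (by positivity : 0 ≤ t * (K - 1))]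
  · refine le_max_of_le_left ?_
    rw [div_le_div_iff₀ (by positivity) (by positivity)]
    have : e ^ 2 ≤ (K - 1) ^ 2 := by nlinarith
    nlinarith [mul_le_mul_of_nonneg_right this (by positivity : 0 ≤ t)]

theorem sub_lt_floor_div_mul_le {t K : ℝ} (hK : 0 < K) :
    t - K < (⌊t / K⌋ : ℝ) * K ∧ (⌊t / K⌋ : ℝ) * K ≤ t := by
  constructor
  · have := mul_lt_mul_of_pos_right (Int.sub_one_lt_floor (t / K)) hK
    rwa [sub_mul, div_mul_cancel₀ _ hK.ne', one_mul] at this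
  · exact (le_div_iff₀ hK).mp (Int.floor_le _)

/-- For real `K > 1` and `t > K/(K-1)`, with `m₀ = t - ⌊t/K⌋ - 1`,
`((K-1)^{m₀+1}/K^t) (t-1)^{t-1} / (m₀^{m₀} (t-1-m₀)^{t-1-m₀})
  ≥ ((K-1)/K) min{1 - K/t, 1 - K/(t(K-1))}` (real powers). -/
theorem stmt_5 (K t : ℝ) (hK : 1 < K) (ht : t > K / (K - 1))
    (m₀ : ℝ) (hm₀ : m₀ = t - (⌊t / K⌋ : ℝ) - 1) :
    (K - 1) ^ (m₀ + 1) / K ^ t * (t - 1) ^ (t - 1)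
        / (m₀ ^ m₀ * (t - 1 - m₀) ^ (t - 1 - m₀))
      ≥ (K - 1) / K * min (1 - K / t) (1 - K / (t * (K - 1))) := by
  have hK1 : 0 < K - 1 := by linarith
  have htK' : K < t * (K - 1) := (div_lt_iff₀ hK1).mp ht
  have ht0 : 0 < t := by nlinarith
  have hn : 0 < t - 1 := by nlinarith
  obtain ⟨hFK_gt, hFK_le⟩ := sub_lt_floor_div_mul_le (t := t) (by linarith : 0 < K)
  set F : ℝ := ((⌊t / K⌋ : ℤ) : ℝ)
  have hm : 0 < m₀ := by rw [hm₀]; nlinarith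
  rw [show t - 1 - m₀ = F by rw [hm₀]; ring]
  rcases le_or_gt (min (1 - K / t) (1 - K / (t * (K - 1)))) 0 with hμ | hμ
  · have hF : 0 ≤ F := by positivity
    calc (K - 1) / K * min (1 - K / t) (1 - K / (t * (K - 1))) ≤ 0 :=
          mul_nonpos_of_nonneg_of_nonpos (by positivity) hμ
      _ ≤ _ := by positivity
  · rw [min_sub_sub_left] at hμ ⊢
    have htK : K < t := (div_lt_one ht0).mp (by linarith [le_max_left (K / t) (K / (t * (K - 1)))])
    have hF : 0 < F := by nlinarith
    have hkl := mul_log_div_add_mul_log_div_le hm.le hF.le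
      (by positivity : 0 < (t - 1) * (K - 1) / K) (by positivity : 0 < (t - 1) / K)
      (by rw [hm₀]; field_simp; ring)
    have hchi : (m₀ - (t - 1) * (K - 1) / K) ^ 2 / ((t - 1) * (K - 1) / K)
        + (F - (t - 1) / K) ^ 2 / ((t - 1) / K) = (t - 1 - F * K) ^ 2 / ((t - 1) * (K - 1)) := by
      rw [hm₀]; field_simp; ring
    have hbound := sq_div_le_max hK htK htK' (by linarith) (by linarith : t - 1 - F * K ≤ K - 1)
    have hlog_min := log_le_sub_one_of_pos hμ
    rw [ge_iff_le, ← log_le_log_iff (by positivity) (by positivity),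
      log_rpow_binomial_term hK hm hF (by rw [hm₀]; ring),
      log_mul (by positivity) hμ.ne']
    linarith
end

section
/- For every real b ≥ 6, with k = ⌊b/2⌋, the sum ∑_{i=1}^{k} ( ⌈ib/(1 - i/b)⌉ - 1 ) ≥ b³/16. -/
/-! Since `ib/(1 - i/b) = ib²/(b - i) ≥ ib²/(b - 1)` for `1 ≤ i < b`, the sum is at least
`(b²/(b - 1))·k(k+1)/2 - k`; this grows with `k`, and at `k = (b - 2)/2` it is
`b³(b - 2)/(8(b - 1)) - (b - 2)/2`, which dominates `b³/16` once `b²(b - 3) ≥ 8(b - 1)`,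
in particular for `b ≥ 6`. -/

open Finset

lemma sum_Icc_one_natCast (k : ℕ) : ∑ i ∈ Icc 1 k, (i : ℝ) = k * (k + 1) / 2 := by
  induction k with
  | zero => simp
  | succ n ih =>
    rw [sum_Icc_succ_top (by omega), ih]
    push_cast
    ring

lemma mul_sq_div_sub_one_le_mul_div_one_sub_div {x b : ℝ} (hx : 1 ≤ x) (hxb : x < b) :
    x * b ^ 2 / (b - 1) ≤ x * b / (1 - x / b) := by
  have hb : 0 < b := by linarith
  have hbx : 0 < b - x := by linarith
  have hrewrite : x * b / (1 - x / b) = x * b ^ 2 / (b - x) := by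
    rw [one_sub_div hb.ne']
    field_simp
  rw [hrewrite]
  exact div_le_div_of_nonneg_left (by positivity) hbx (by linarith)

lemma sum_ceil_sub_one_ge {b : ℝ} {k : ℕ} (hkb : (k : ℝ) < b) :
    b ^ 2 / (b - 1) * (k * (k + 1) / 2) - k ≤
      ∑ i ∈ Icc 1 k, ((⌈(i : ℝ) * b / (1 - (i : ℝ) / b)⌉ : ℝ) - 1) := by
  have hterm : ∀ i ∈ Icc 1 k,
      (i : ℝ) * (b ^ 2 / (b - 1)) - 1 ≤ (⌈(i : ℝ) * b / (1 - (i : ℝ) / b)⌉ : ℝ) - 1 := by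
    intro i hi
    obtain ⟨h1i, hik⟩ := mem_Icc.mp hi
    have hi_lt : (i : ℝ) < b := lt_of_le_of_lt (by exact_mod_cast hik) hkb
    have := mul_sq_div_sub_one_le_mul_div_one_sub_div (by exact_mod_cast h1i) hi_lt
    have := Int.le_ceil ((i : ℝ) * b / (1 - (i : ℝ) / b))
    rw [mul_div_assoc']
    linarith
  calc b ^ 2 / (b - 1) * (k * (k + 1) / 2) - k
      = ∑ i ∈ Icc 1 k, ((i : ℝ) * (b ^ 2 / (b - 1)) - 1) := by
        rw [sum_sub_distrib, ← sum_mul, sum_Icc_one_natCast]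
        simp only [sum_const, Nat.card_Icc, add_tsub_cancel_right, nsmul_eq_mul, mul_one]
        ring
    _ ≤ _ := sum_le_sum hterm

lemma cube_div_sixteen_le {b k : ℝ} (hb : 6 ≤ b) (hk : b / 2 - 1 ≤ k) :
    b ^ 3 / 16 ≤ b ^ 2 / (b - 1) * (k * (k + 1) / 2) - k := by
  have hb1 : 0 < b - 1 := by linarith
  rw [div_mul_eq_mul_div, le_sub_iff_add_le, le_div_iff₀ hb1]
  nlinarith [mul_nonneg (sub_nonneg.2 hk) (sub_nonneg.2 hk), sq_nonneg (b - 6),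
    mul_nonneg (sub_nonneg.2 hk) (by linarith : (0 : ℝ) ≤ b)]

/-- Claim 2: for real `b ≥ 6`, with `k = ⌊b/2⌋`,
`∑_{i=1}^{k} (⌈ib/(1 - i/b)⌉ - 1) ≥ b³/16`. -/
theorem stmt_16 (b : ℝ) (hb : 6 ≤ b) :
    ∑ i ∈ Finset.Icc 1 ⌊b / 2⌋₊,
        ((⌈(i : ℝ) * b / (1 - (i : ℝ) / b)⌉ : ℝ) - 1)
      ≥ b ^ 3 / 16 := by
  have hk_le : (⌊b / 2⌋₊ : ℝ) ≤ b / 2 := Nat.floor_le (by linarith)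
  have hk_ge : b / 2 - 1 ≤ ⌊b / 2⌋₊ := (Nat.sub_one_lt_floor _).le
  exact (cube_div_sixteen_le hb hk_ge).trans (sum_ceil_sub_one_ge (by linarith))
end
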